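/- Let G be a group with finite generating set S and Cayley graph Γ = Cay(G,S). Let A, B ⊆ G be such that B is a d_S-barrier between {id} and A. Then for each 0 ≤ p < p_c(Γ), E_p[#(C(id) ∩ A)] ≤ E_p[#(C(id) ∩ B)] · χ_p. -/

import Mathlib

open MeasureTheory Filter Set Pointwise
open scoped ENNReal

noncomputable section

universe u

variable {G : Type u} [Group G]

/-- The word norm with respect to the generating set `S`. -/
def wordNorm (S : Finset G) (g : G) : ℕ :=
  sInf {n : ℕ | ∃ l : List G, l.length = n ∧ (∀ x ∈ l, x ∈ S ∨ x⁻¹ ∈ S) ∧ l.prod = g}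

/-- The word metric with respect to the generating set `S`. -/
def wordDist (S : Finset G) (g h : G) : ℕ := wordNorm S (g⁻¹ * h)

/-- The Cayley graph of `G` with respect to `S`. -/
def cayleyGraph (S : Finset G) : SimpleGraph G where
  Adj v w := v ≠ w ∧ ∃ s : G, (s ∈ S ∨ s⁻¹ ∈ S) ∧ w = v * s
  symm := by
    constructor
    rintro v w ⟨hne, s, hs, rfl⟩
    refine ⟨fun h => hne h.symm, s⁻¹, ?_, by group⟩
    rcases hs with h | h
    · exact Or.inr (by simpa using h)
    · exact Or.inl h
  loopless := ⟨fun v h => h.1 rfl⟩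

/-- Bond-percolation configurations: an assignment of `true` (retained) or `false`
(deleted) to every edge of the Cayley graph. -/
abbrev Config (S : Finset G) : Type u := ↥(cayleyGraph S).edgeSet → Bool

/-- `μ` is the product of Bernoulli(`p`) measures on `{0,1}^ι`: a probability measure
under which the coordinates are independent, each equal to `true` with probability `p`. -/
def IsBernoulliProduct {ι : Type*} (p : ℝ) (μ : Measure (ι → Bool)) : Prop :=
  IsProbabilityMeasure μ ∧
    ∀ (t : Finset ι) (f : ι → Bool),
      μ {ω | ∀ e ∈ t, ω e = f e} =
        ∏ e ∈ t, (if f e then ENNReal.ofReal p else ENNReal.ofReal (1 - p))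

/-- The probability of the event `A` under Bernoulli-`p` bond percolation on the Cayley
graph (this is the value `μ A` for the unique Bernoulli product measure `μ`). -/
def percProb (S : Finset G) (p : ℝ) (A : Set (Config S)) : ℝ≥0∞ :=
  ⨆ (μ : Measure (Config S)) (_ : IsBernoulliProduct p μ), μ A

/-- The expectation of `F` under Bernoulli-`p` bond percolation. -/
def percExp (S : Finset G) (p : ℝ) (F : Config S → ℝ≥0∞) : ℝ≥0∞ :=
  ⨆ (μ : Measure (Config S)) (_ : IsBernoulliProduct p μ), ∫⁻ ω, F ω ∂μ

/-- `v` and `w` are joined by an open (retained) edge in the configuration `ω`. -/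
def openAdj (S : Finset G) (ω : Config S) (v w : G) : Prop :=
  ∃ h : (cayleyGraph S).Adj v w, ω ⟨s(v, w), (cayleyGraph S).mem_edgeSet.mpr h⟩ = true

/-- `v ↔ w` : `v` and `w` are connected in the open subgraph determined by `ω`. -/
def percConn (S : Finset G) (ω : Config S) : G → G → Prop :=
  Relation.ReflTransGen (openAdj S ω)

/-- The cluster of `v` in the configuration `ω`. -/
def cluster (S : Finset G) (ω : Config S) (v : G) : Set G := {w | percConn S ω v w}

/-- `C` is an infinite cluster of the configuration `ω`. -/
def IsInfiniteCluster (S : Finset G) (ω : Config S) (C : Set G) : Prop :=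
  (∃ v : G, C = cluster S ω v) ∧ C.Infinite

/-- The critical probability `p_c`. -/
def pc (S : Finset G) : ℝ :=
  sInf {p ∈ Set.Icc (0 : ℝ) 1 |
    percProb S p {ω | ∃ C : Set G, IsInfiniteCluster S ω C} = 1}

/-- The uniqueness threshold `p_u`. -/
def pu (S : Finset G) : ℝ :=
  sInf {p ∈ Set.Icc (0 : ℝ) 1 |
    percProb S p {ω | ∃! C : Set G, IsInfiniteCluster S ω C} = 1}

/-- The two-point function `τ_p(g, h)`. -/
def tau (S : Finset G) (p : ℝ) (g h : G) : ℝ≥0∞ := percProb S p {ω | percConn S ω g h}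

/-- The susceptibility `χ_p = Σ_g τ_p(id, g) = E_p[#C(id)]`. -/
def chi (S : Finset G) (p : ℝ) : ℝ≥0∞ := ∑' g : G, tau S p 1 g

/-- The expected number of points of `A` in the cluster of the identity, `E_p[#(C(id) ∩ A)]`. -/
def clusterExp (S : Finset G) (p : ℝ) (A : Set G) : ℝ≥0∞ :=
  percExp S p fun ω => ((cluster S ω 1 ∩ A).encard : ℝ≥0∞)

/-- `B` is a `d_S`-barrier between `A` and `C`: every `d_S`-path starting in `A` and
ending in `C` meets `B`. -/
def IsBarrier (S : Finset G) (B A C : Set G) : Prop :=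
  ∀ (n : ℕ) (γ : ℕ → G), γ 0 ∈ A → γ n ∈ C →
    (∀ i < n, wordDist S (γ i) (γ (i + 1)) ≤ 1) → ∃ i ≤ n, γ i ∈ B

/-- `B` is an `r`-roughly branching subset of `G`. -/
def RoughlyBranching (S : Finset G) (r : ℝ) (B : Set G) : Prop :=
  ∃ B' : Set G,
    (∀ b ∈ B, ∃ b' ∈ B', (wordDist S b b' : ℝ) ≤ r) ∧
    ∀ k : ℕ, 1 ≤ k → ∀ g h : Fin k → G, (∀ i, g i ∈ B') → (∀ i, h i ∈ B') →
      (List.ofFn g).prod = (List.ofFn h).prod → g = h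

/-! ### Auxiliary development for the barrier lemma -/

namespace BarrierProof

variable {G : Type u} [Group G]

/-! #### Word metric basics -/

lemma wordNorm_le_one {S : Finset G} {s : G} (hs : s ∈ S ∨ s⁻¹ ∈ S) : wordNorm S s ≤ 1 :=
  Nat.sInf_le ⟨[s], rfl, by simpa using hs, by simp⟩

lemma wordDist_le_one_of_adj {S : Finset G} {x y : G} (h : (cayleyGraph S).Adj x y) :
    wordDist S x y ≤ 1 := by
  obtain ⟨-, s, hs, rfl⟩ := (h : x ≠ y ∧ ∃ s : G, (s ∈ S ∨ s⁻¹ ∈ S) ∧ y = x * s)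
  have : x⁻¹ * (x * s) = s := by group
  rw [wordDist, this]
  exact wordNorm_le_one hs

lemma openAdj_adj {S : Finset G} {ω : Config S} {x y : G} (h : openAdj S ω x y) :
    (cayleyGraph S).Adj x y := h.1

lemma wordDist_le_one_of_openAdj {S : Finset G} {ω : Config S} {x y : G}
    (h : openAdj S ω x y) : wordDist S x y ≤ 1 :=
  wordDist_le_one_of_adj h.1

/-! #### Chains and barriers -/

lemma rtg_of_chain {r : G → G → Prop} :
    ∀ (l : List G) (v : G), List.Chain r v l → ∀ x ∈ v :: l, Relation.ReflTransGen r v x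
  | [], v, _, x, hx => by
      simp only [List.mem_singleton] at hx
      subst hx; exact Relation.ReflTransGen.refl
  | y :: l, v, h, x, hx => by
      rw [List.Chain, List.chain_cons] at h
      rcases List.mem_cons.mp hx with rfl | hx
      · exact Relation.ReflTransGen.refl
      · exact (Relation.ReflTransGen.single h.1).trans (rtg_of_chain l y h.2 x hx)

lemma chain_forall_snd {r : G → G → Prop} {P : G → Prop} (hP : ∀ x y, r x y → P y) :
    ∀ (l : List G) (v : G), List.Chain r v l → ∀ x ∈ l, P x
  | [], _, _, x, hx => by simp at hx
  | y :: l, v, h, x, hx => by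
      rw [List.Chain, List.chain_cons] at h
      rcases List.mem_cons.mp hx with rfl | hx
      · exact hP _ _ h.1
      · exact chain_forall_snd hP l y h.2 x hx

/-- A `wordDist ≤ 1` chain from `1` ending in `A` must meet the barrier `B`. -/
lemma chain_barrier_aux {S : Finset G} {B A : Set G} (hB : IsBarrier S B {1} A)
    {l : List G} (hl : List.Chain (fun x y => wordDist S x y ≤ 1) 1 l)
    (hlast : ((1 : G) :: l).getLast (List.cons_ne_nil _ _) ∈ A) :
    ∃ x ∈ (1 : G) :: l, x ∈ B := by
  classical
  have hA : (fun i => ((1 : G) :: l).getD i 1) l.length ∈ A := by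
    have hlen : l.length < ((1 : G) :: l).length := by simp
    show ((1 : G) :: l).getD l.length 1 ∈ A
    rw [List.getD_eq_getElem _ _ hlen]
    have hgl := List.getLast_eq_getElem (l := (1 : G) :: l) (List.cons_ne_nil _ _)
    simp only [List.length_cons, Nat.add_sub_cancel] at hgl
    rw [← hgl]
    exact hlast
  have hstep : ∀ i < l.length, wordDist S (((1 : G) :: l).getD i 1)
      (((1 : G) :: l).getD (i + 1) 1) ≤ 1 := by
    intro i hilt
    have h1 : i < ((1 : G) :: l).length := by simp only [List.length_cons]; omega
    have h2 : i + 1 < ((1 : G) :: l).length := by simp only [List.length_cons]; omega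
    rw [List.getD_eq_getElem _ _ h1, List.getD_eq_getElem _ _ h2]
    exact List.isChain_iff_getElem.mp hl i h2
  obtain ⟨i, hi, hiB⟩ := hB l.length (fun i => ((1 : G) :: l).getD i 1) (by simp) hA hstep
  have hlen : i < ((1 : G) :: l).length := by simp only [List.length_cons]; omega
  refine ⟨((1 : G) :: l).getD i 1, ?_, hiB⟩
  rw [List.getD_eq_getElem _ _ hlen]
  exact List.getElem_mem _

/-- On the event that `1` is connected to a point of `A`, the cluster of `1` meets `B`. -/
lemma exists_mem_B_of_conn {S : Finset G} {B A : Set G} (hB : IsBarrier S B {1} A)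
    {ω : Config S} {a : G} (ha : a ∈ A) (hconn : percConn S ω 1 a) :
    ∃ b ∈ B, percConn S ω 1 b := by
  obtain ⟨l, hl, hlast⟩ := List.exists_isChain_cons_of_relationReflTransGen hconn
  obtain ⟨x, hx, hxB⟩ := chain_barrier_aux hB
    (hl.imp fun x y (h : openAdj S ω x y) => wordDist_le_one_of_openAdj h)
    (by rw [hlast]; exact ha)
  exact ⟨x, hxB, rtg_of_chain l 1 hl x hx⟩

/-! #### The exploration cluster `U` -/

/-- The cluster of `1` using open edges avoiding the barrier `B`. -/
def Ucl (S : Finset G) (B : Set G) (ω : Config S) : Set G :=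
  {v | Relation.ReflTransGen (fun x y => openAdj S ω x y ∧ x ∉ B ∧ y ∉ B) 1 v}

lemma one_mem_Ucl {S : Finset G} {B : Set G} {ω : Config S} : (1 : G) ∈ Ucl S B ω :=
  Relation.ReflTransGen.refl

lemma Ucl_subset_cluster {S : Finset G} {B : Set G} {ω : Config S} {v : G}
    (hv : v ∈ Ucl S B ω) : percConn S ω 1 v :=
  Relation.ReflTransGen.mono (fun _ _ h => h.1) _ _ hv

lemma not_mem_B_of_mem_Ucl {S : Finset G} {B : Set G} {ω : Config S} (h1B : (1 : G) ∉ B)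
    {v : G} (hv : v ∈ Ucl S B ω) : v ∉ B := by
  induction hv with
  | refl => exact h1B
  | tail _ h _ => exact h.2.2

lemma rtg_self_restrict {α : Type*} {r : α → α → Prop} {a v : α}
    (h : Relation.ReflTransGen r a v) :
    Relation.ReflTransGen
      (fun x y => r x y ∧ Relation.ReflTransGen r a x ∧ Relation.ReflTransGen r a y) a v := by
  induction h with
  | refl => exact Relation.ReflTransGen.refl
  | tail h1 h2 ih => exact ih.tail ⟨h2, h1, h1.tail h2⟩

/-- If `a ∈ A` is connected to `1` then it is not in the exploration cluster. -/
lemma not_mem_Ucl_of_mem_A {S : Finset G} {B A : Set G} (hB : IsBarrier S B {1} A)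
    (h1B : (1 : G) ∉ B) {ω : Config S} {a : G} (ha : a ∈ A) : a ∉ Ucl S B ω := by
  intro haU
  obtain ⟨l, hl, hlast⟩ := List.exists_isChain_cons_of_relationReflTransGen haU
  obtain ⟨x, hx, hxB⟩ := chain_barrier_aux hB
    (hl.imp fun x y (h : openAdj S ω x y ∧ x ∉ B ∧ y ∉ B) => wordDist_le_one_of_openAdj h.1) (by rw [hlast]; exact ha)
  rcases List.mem_cons.mp hx with rfl | hx
  · exact h1B hxB
  · exact (chain_forall_snd (fun x y (h : openAdj S ω x y ∧ x ∉ B ∧ y ∉ B) => h.2.2) l 1 hl x hx) hxB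

/-- Key decomposition: a connection from `1` to `a ∈ A` passes through a boundary point
`b ∈ B` of the exploration cluster, and then connects to `a` avoiding the exploration
cluster entirely. -/
lemma exists_boundary {S : Finset G} {B A : Set G} (hB : IsBarrier S B {1} A)
    (h1B : (1 : G) ∉ B) {ω : Config S} {a : G} (ha : a ∈ A) (hconn : percConn S ω 1 a) :
    ∃ b, b ∈ B ∧ (∃ u ∈ Ucl S B ω, openAdj S ω u b) ∧
      Relation.ReflTransGen
        (fun x y => openAdj S ω x y ∧ x ∉ Ucl S B ω ∧ y ∉ Ucl S B ω) b a := by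
  have haU : a ∉ Ucl S B ω := not_mem_Ucl_of_mem_A hB h1B ha
  have key : ∀ w, percConn S ω 1 w → w ∉ Ucl S B ω →
      ∃ b, (∃ u ∈ Ucl S B ω, openAdj S ω u b) ∧ b ∉ Ucl S B ω ∧
        Relation.ReflTransGen
          (fun x y => openAdj S ω x y ∧ x ∉ Ucl S B ω ∧ y ∉ Ucl S B ω) b w := by
    intro w hw
    induction hw with
    | refl => intro h1; exact absurd one_mem_Ucl h1
    | @tail x w h1 h2 ih =>
        intro hwU
        by_cases hxU : x ∈ Ucl S B ω
        · exact ⟨w, ⟨x, hxU, h2⟩, hwU, Relation.ReflTransGen.refl⟩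
        · obtain ⟨b, hb1, hb2, hb3⟩ := ih hxU
          exact ⟨b, hb1, hb2, hb3.tail ⟨h2, hxU, hwU⟩⟩
  obtain ⟨b, hb1, hb2, hb3⟩ := key a hconn haU
  refine ⟨b, ?_, hb1, hb3⟩
  by_contra hbB
  obtain ⟨u, huU, hub⟩ := hb1
  exact hb2 (Relation.ReflTransGen.tail huU ⟨hub, not_mem_B_of_mem_Ucl h1B huU, hbB⟩)

/-- Characterization of the event `Ucl = V` using only edges touching `V`. -/
lemma Ucl_eq_iff {S : Finset G} {B V : Set G} (h1B : (1 : G) ∉ B) (h1V : (1 : G) ∈ V)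
    (hVB : ∀ v ∈ V, v ∉ B) (ω : Config S) :
    Ucl S B ω = V ↔
      (∀ v ∈ V, Relation.ReflTransGen
          (fun x y => openAdj S ω x y ∧ x ∈ V ∧ y ∈ V) 1 v) ∧
      (∀ x ∈ V, ∀ y, y ∉ V → y ∉ B → ¬ openAdj S ω x y) := by
  constructor
  · rintro rfl
    constructor
    · intro v hv
      refine Relation.ReflTransGen.mono ?_ _ _ (rtg_self_restrict hv)
      rintro x y ⟨hr, hx, hy⟩
      exact ⟨hr.1, hx, hy⟩
    · intro x hx y hyV hyB hadj
      exact hyV (Relation.ReflTransGen.tail hx ⟨hadj, not_mem_B_of_mem_Ucl h1B hx, hyB⟩)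
  · rintro ⟨h1, h2⟩
    apply Set.eq_of_subset_of_subset
    · intro v hv
      induction hv with
      | refl => exact h1V
      | @tail x y hx hr ih =>
          by_contra hyV
          exact h2 x ih y hyV hr.2.2 hr.1
    · intro v hv
      refine Relation.ReflTransGen.mono ?_ _ _ (h1 v hv)
      rintro x y ⟨hadj, hx, hy⟩
      exact ⟨hadj, hVB x hx, hVB y hy⟩

/-! #### Measurability infrastructure -/

/-- The σ-algebra generated by coordinates in `D`. -/
def coordSpace (S : Finset G) (D : Set ↥(cayleyGraph S).edgeSet) :
    MeasurableSpace (Config S) :=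
  MeasurableSpace.comap (fun (ω : Config S) (e : D) => ω e) inferInstance

lemma coordSpace_le (S : Finset G) (D : Set ↥(cayleyGraph S).edgeSet) :
    coordSpace S D ≤ (inferInstance : MeasurableSpace (Config S)) :=
  measurable_iff_comap_le.mp (measurable_pi_lambda _ fun e => measurable_pi_apply _)

lemma measurableSet_coord {S : Finset G} {D : Set ↥(cayleyGraph S).edgeSet}
    {e : ↥(cayleyGraph S).edgeSet} (he : e ∈ D) (c : Bool) :
    MeasurableSet[coordSpace S D] {ω : Config S | ω e = c} := by
  refine ⟨(fun σ : D → Bool => σ ⟨e, he⟩) ⁻¹' {c},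
    (measurable_pi_apply (⟨e, he⟩ : D)) (measurableSet_singleton c), ?_⟩
  rfl

lemma measurableSet_const_prop {S : Finset G} {m : MeasurableSpace (Config S)} (P : Prop) :
    MeasurableSet[m] {_ω : Config S | P} := by
  by_cases h : P
  · have : {_ω : Config S | P} = Set.univ := by simp [h]
    rw [this]; exact @MeasurableSet.univ _ m
  · have : {_ω : Config S | P} = ∅ := by simp [h]
    rw [this]; exact @MeasurableSet.empty _ m

lemma measurableSet_openAdjEvent {S : Finset G} {m : MeasurableSpace (Config S)} (x y : G)
    (hm : ∀ h : (cayleyGraph S).Adj x y,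
      MeasurableSet[m] {ω : Config S | ω ⟨s(x, y), (cayleyGraph S).mem_edgeSet.mpr h⟩ = true}) :
    MeasurableSet[m] {ω : Config S | openAdj S ω x y} := by
  by_cases h : (cayleyGraph S).Adj x y
  · have : {ω : Config S | openAdj S ω x y}
        = {ω : Config S | ω ⟨s(x, y), (cayleyGraph S).mem_edgeSet.mpr h⟩ = true} := by
      ext ω
      exact ⟨fun ⟨_, hh⟩ => hh, fun hh => ⟨h, hh⟩⟩
    rw [this]; exact hm h
  · have : {ω : Config S | openAdj S ω x y} = ∅ := by
      ext ω; simp only [Set.mem_setOf_eq, Set.mem_empty_iff_false, iff_false]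
      rintro ⟨h', -⟩; exact h h'
    rw [this]; exact measurableSet_const_prop False

lemma measurableSet_coord_pi {S : Finset G} (e : ↥(cayleyGraph S).edgeSet) (c : Bool) :
    MeasurableSet {ω : Config S | ω e = c} := by
  have heq : {ω : Config S | ω e = c} = (fun ω : Config S => ω e) ⁻¹' {c} := by
    ext ω; simp
  rw [heq]
  exact measurable_pi_apply e (measurableSet_singleton c)

lemma measurableSet_openAdj_pi {S : Finset G} (x y : G) :
    MeasurableSet {ω : Config S | openAdj S ω x y} :=
  measurableSet_openAdjEvent x y fun h =>
    measurableSet_coord_pi ⟨s(x, y), (cayleyGraph S).mem_edgeSet.mpr h⟩ true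

lemma measurableSet_openAdj_coord {S : Finset G} {D : Set ↥(cayleyGraph S).edgeSet}
    (x y : G)
    (hD : ∀ h : (cayleyGraph S).Adj x y,
      (⟨s(x, y), (cayleyGraph S).mem_edgeSet.mpr h⟩ : ↥(cayleyGraph S).edgeSet) ∈ D) :
    MeasurableSet[coordSpace S D] {ω : Config S | openAdj S ω x y} :=
  measurableSet_openAdjEvent x y fun h => measurableSet_coord (hD h) true

lemma measurableSet_chain {S : Finset G} {m : MeasurableSpace (Config S)}
    {r : Config S → G → G → Prop} (hr : ∀ x y, MeasurableSet[m] {ω | r ω x y}) :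
    ∀ (l : List G) (v : G), MeasurableSet[m] {ω : Config S | List.Chain (r ω) v l}
  | [], v => by
      have : {ω : Config S | List.Chain (r ω) v []} = Set.univ := by
        ext ω; simp [List.Chain]
      rw [this]; exact measurableSet_const_prop True
  | y :: l, v => by
      have : {ω : Config S | List.Chain (r ω) v (y :: l)}
          = {ω | r ω v y} ∩ {ω | List.Chain (r ω) y l} := by
        ext ω; simp [List.Chain, List.chain_cons]
      rw [this]
      exact (hr v y).inter (measurableSet_chain hr l y)

lemma measurableSet_rtg [Countable G] {S : Finset G} {m : MeasurableSpace (Config S)}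
    {r : Config S → G → G → Prop} (hr : ∀ x y, MeasurableSet[m] {ω | r ω x y}) (v w : G) :
    MeasurableSet[m] {ω : Config S | Relation.ReflTransGen (r ω) v w} := by
  have : {ω : Config S | Relation.ReflTransGen (r ω) v w}
      = ⋃ l : List G, {ω : Config S | List.Chain (r ω) v l} ∩
          {_ω : Config S | (v :: l).getLast (List.cons_ne_nil _ _) = w} := by
    ext ω
    simp only [Set.mem_iUnion, Set.mem_inter_iff, Set.mem_setOf_eq]
    constructor
    · intro h
      obtain ⟨l, h1, h2⟩ := List.exists_isChain_cons_of_relationReflTransGen h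
      exact ⟨l, h1, h2⟩
    · rintro ⟨l, h1, h2⟩
      exact List.relationReflTransGen_of_exists_isChain_cons l h1 h2
  rw [this]
  exact MeasurableSet.iUnion fun l =>
    (measurableSet_chain hr l v).inter (measurableSet_const_prop _)

lemma measurableSet_percConn [Countable G] {S : Finset G} (v w : G) :
    MeasurableSet {ω : Config S | percConn S ω v w} :=
  measurableSet_rtg (fun x y => measurableSet_openAdj_pi x y) v w

/-- Edges touching the vertex set `V`. -/
def touching (S : Finset G) (V : Set G) : Set ↥(cayleyGraph S).edgeSet :=
  {e | ∃ v ∈ V, v ∈ (e : Sym2 G)}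

lemma measurableSet_connOff [Countable G] {S : Finset G} (V : Set G) (b a : G) :
    MeasurableSet[coordSpace S (touching S V)ᶜ]
      {ω : Config S | Relation.ReflTransGen
        (fun x y => openAdj S ω x y ∧ x ∉ V ∧ y ∉ V) b a} := by
  refine measurableSet_rtg (r := fun ω x y => openAdj S ω x y ∧ x ∉ V ∧ y ∉ V)
    (fun x y => ?_) b a
  by_cases hxy : x ∉ V ∧ y ∉ V
  · have : {ω : Config S | openAdj S ω x y ∧ x ∉ V ∧ y ∉ V}
        = {ω : Config S | openAdj S ω x y} := by
      ext ω; simp [hxy.1, hxy.2]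
    rw [this]
    refine measurableSet_openAdj_coord (D := (touching S V)ᶜ) x y fun h => ?_
    simp only [Set.mem_compl_iff, touching, Set.mem_setOf_eq]
    rintro ⟨v, hvV, hv⟩
    rw [Sym2.mem_iff] at hv
    rcases hv with rfl | rfl
    · exact hxy.1 hvV
    · exact hxy.2 hvV
  · have : {ω : Config S | openAdj S ω x y ∧ x ∉ V ∧ y ∉ V} = ∅ := by
      ext ω; simp only [Set.mem_setOf_eq, Set.mem_empty_iff_false, iff_false]
      rintro ⟨-, h1, h2⟩; exact hxy ⟨h1, h2⟩
    rw [this]; exact measurableSet_const_prop False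

lemma measurableSet_Ucl_eq [Countable G] {S : Finset G} {B : Set G} (h1B : (1 : G) ∉ B)
    (V : Finset G) :
    MeasurableSet[coordSpace S (touching S (V : Set G))]
      {ω : Config S | Ucl S B ω = (V : Set G)} := by
  classical
  by_cases hV : (1 : G) ∈ (V : Set G) ∧ ∀ v ∈ (V : Set G), v ∉ B
  · have heq : {ω : Config S | Ucl S B ω = (V : Set G)}
        = {ω : Config S | ∀ v ∈ (V : Set G), Relation.ReflTransGen
              (fun x y => openAdj S ω x y ∧ x ∈ (V : Set G) ∧ y ∈ (V : Set G)) 1 v} ∩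
          {ω : Config S | ∀ x ∈ (V : Set G), ∀ y, y ∉ (V : Set G) → y ∉ B →
              ¬ openAdj S ω x y} := by
      ext ω
      rw [Set.mem_inter_iff]
      exact Ucl_eq_iff h1B hV.1 hV.2 ω
    rw [heq]
    apply MeasurableSet.inter
    · have : {ω : Config S | ∀ v ∈ (V : Set G), Relation.ReflTransGen
            (fun x y => openAdj S ω x y ∧ x ∈ (V : Set G) ∧ y ∈ (V : Set G)) 1 v}
          = ⋂ v : G, {ω : Config S | v ∈ (V : Set G) → Relation.ReflTransGen
            (fun x y => openAdj S ω x y ∧ x ∈ (V : Set G) ∧ y ∈ (V : Set G)) 1 v} := by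
        ext ω; simp
      rw [this]
      refine MeasurableSet.iInter fun v => ?_
      by_cases hv : v ∈ (V : Set G)
      · have : {ω : Config S | v ∈ (V : Set G) → Relation.ReflTransGen
              (fun x y => openAdj S ω x y ∧ x ∈ (V : Set G) ∧ y ∈ (V : Set G)) 1 v}
            = {ω : Config S | Relation.ReflTransGen
              (fun x y => openAdj S ω x y ∧ x ∈ (V : Set G) ∧ y ∈ (V : Set G)) 1 v} := by
          ext ω; simp [hv]
        rw [this]
        refine measurableSet_rtg
          (r := fun ω x y => openAdj S ω x y ∧ x ∈ (V : Set G) ∧ y ∈ (V : Set G))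
          (fun x y => ?_) 1 v
        by_cases hxy : x ∈ (V : Set G) ∧ y ∈ (V : Set G)
        · have : {ω : Config S | openAdj S ω x y ∧ x ∈ (V : Set G) ∧ y ∈ (V : Set G)}
              = {ω : Config S | openAdj S ω x y} := by
            ext ω; simp [hxy.1, hxy.2]
          rw [this]
          exact measurableSet_openAdj_coord (D := touching S (V : Set G)) x y fun h =>
            ⟨x, hxy.1, by rw [Sym2.mem_iff]; left; rfl⟩
        · have : {ω : Config S | openAdj S ω x y ∧ x ∈ (V : Set G) ∧ y ∈ (V : Set G)}
              = ∅ := by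
            ext ω; simp only [Set.mem_setOf_eq, Set.mem_empty_iff_false, iff_false]
            rintro ⟨-, h1, h2⟩; exact hxy ⟨h1, h2⟩
          rw [this]; exact measurableSet_const_prop False
      · have : {ω : Config S | v ∈ (V : Set G) → Relation.ReflTransGen
              (fun x y => openAdj S ω x y ∧ x ∈ (V : Set G) ∧ y ∈ (V : Set G)) 1 v}
            = Set.univ := by
          ext ω; simp [hv]
        rw [this]; exact measurableSet_const_prop True
    · have : {ω : Config S | ∀ x ∈ (V : Set G), ∀ y, y ∉ (V : Set G) → y ∉ B →
            ¬ openAdj S ω x y}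
          = ⋂ x : G, ⋂ y : G, {ω : Config S | x ∈ (V : Set G) → y ∉ (V : Set G) →
            y ∉ B → ¬ openAdj S ω x y} := by
        ext ω
        simp only [Set.mem_iInter, Set.mem_setOf_eq]
        exact ⟨fun h x y hx hy hB => h x hx y hy hB, fun h x hx y hy hB => h x y hx hy hB⟩
      rw [this]
      refine MeasurableSet.iInter fun x => MeasurableSet.iInter fun y => ?_
      by_cases hcond : x ∈ (V : Set G) ∧ y ∉ (V : Set G) ∧ y ∉ B
      · have : {ω : Config S | x ∈ (V : Set G) → y ∉ (V : Set G) → y ∉ B →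
              ¬ openAdj S ω x y} = {ω : Config S | openAdj S ω x y}ᶜ := by
          ext ω; simp [hcond.1, hcond.2.1, hcond.2.2]
        rw [this]
        exact (measurableSet_openAdj_coord (D := touching S (V : Set G)) x y fun h =>
          ⟨x, hcond.1, by rw [Sym2.mem_iff]; left; rfl⟩).compl
      · have : {ω : Config S | x ∈ (V : Set G) → y ∉ (V : Set G) → y ∉ B →
              ¬ openAdj S ω x y} = Set.univ := by
          ext ω
          simp only [Set.mem_setOf_eq, Set.mem_univ, iff_true]
          intro h1 h2 h3
          exact absurd ⟨h1, h2, h3⟩ hcond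
        rw [this]; exact measurableSet_const_prop True
  · have : {ω : Config S | Ucl S B ω = (V : Set G)} = ∅ := by
      ext ω
      simp only [Set.mem_setOf_eq, Set.mem_empty_iff_false, iff_false]
      intro h
      apply hV
      constructor
      · rw [← h]; exact one_mem_Ucl
      · intro v hv; rw [← h] at hv; exact not_mem_B_of_mem_Ucl h1B hv
    rw [this]; exact measurableSet_const_prop False

/-! #### Independence from the Bernoulli product structure -/

/-- Cylinder events. -/
def cylEvent (S : Finset G) (t : Finset ↥(cayleyGraph S).edgeSet)
    (f : ↥(cayleyGraph S).edgeSet → Bool) : Set (Config S) :=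
  {ω | ∀ e ∈ t, ω e = f e}

/-- Cylinder events supported in `D`. -/
def cylsIn (S : Finset G) (D : Set ↥(cayleyGraph S).edgeSet) : Set (Set (Config S)) :=
  {s | ∃ t : Finset ↥(cayleyGraph S).edgeSet, ↑t ⊆ D ∧
    ∃ f : ↥(cayleyGraph S).edgeSet → Bool, s = cylEvent S t f}

lemma isPiSystem_cylsIn (S : Finset G) (D : Set ↥(cayleyGraph S).edgeSet) :
    IsPiSystem (cylsIn S D) := by
  classical
  rintro s ⟨t1, ht1, f1, rfl⟩ s' ⟨t2, ht2, f2, rfl⟩ hne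
  refine ⟨t1 ∪ t2, by rw [Finset.coe_union]; exact Set.union_subset ht1 ht2,
    fun e => if e ∈ t1 then f1 e else f2 e, ?_⟩
  obtain ⟨ω₀, hω₀1, hω₀2⟩ := hne
  ext ω
  simp only [cylEvent, Set.mem_inter_iff, Set.mem_setOf_eq, Finset.mem_union]
  constructor
  · rintro ⟨h1, h2⟩ e he
    rcases he with he | he
    · rw [if_pos he]; exact h1 e he
    · by_cases he1 : e ∈ t1
      · rw [if_pos he1]; exact h1 e he1
      · rw [if_neg he1]; exact h2 e he
  · intro h
    constructor
    · intro e he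
      have := h e (Or.inl he); rwa [if_pos he] at this
    · intro e he
      have := h e (Or.inr he)
      by_cases he1 : e ∈ t1
      · rw [if_pos he1] at this
        rw [this, ← hω₀1 e he1, hω₀2 e he]
      · rwa [if_neg he1] at this

lemma generateFrom_cylsIn (S : Finset G) (D : Set ↥(cayleyGraph S).edgeSet) :
    MeasurableSpace.generateFrom (cylsIn S D) = coordSpace S D := by
  apply le_antisymm
  · apply MeasurableSpace.generateFrom_le
    rintro s ⟨t, htD, f, rfl⟩
    have : cylEvent S t f = ⋂ e ∈ t, {ω : Config S | ω e = f e} := by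
      ext ω; simp [cylEvent]
    rw [this]
    exact MeasurableSet.biInter t.countable_toSet
      (fun e he => measurableSet_coord (htD he) (f e))
  · letI m' : MeasurableSpace (Config S) := MeasurableSpace.generateFrom (cylsIn S D)
    have hmeas : @Measurable (Config S) (D → Bool) m' _ (fun ω (e : D) => ω e) := by
      apply measurable_pi_lambda
      intro e
      apply measurable_to_countable'
      intro c
      have heq : (fun ω : Config S => ω (e : ↥(cayleyGraph S).edgeSet)) ⁻¹' {c}
          = cylEvent S {(e : ↥(cayleyGraph S).edgeSet)} (fun _ => c) := by
        ext ω; simp [cylEvent]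
      rw [heq]
      exact MeasurableSpace.measurableSet_generateFrom
        ⟨{(e : ↥(cayleyGraph S).edgeSet)}, by simpa using e.2, fun _ => c, rfl⟩
    exact measurable_iff_comap_le.mp hmeas

lemma indep_coordSpace {S : Finset G} {p : ℝ} {μ : Measure (Config S)}
    (hμ : IsBernoulliProduct p μ) (D : Set ↥(cayleyGraph S).edgeSet) :
    ProbabilityTheory.Indep (coordSpace S D) (coordSpace S Dᶜ) μ := by
  classical
  haveI := hμ.1
  refine ProbabilityTheory.IndepSets.indep (coordSpace_le S D) (coordSpace_le S Dᶜ)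
    (isPiSystem_cylsIn S D) (isPiSystem_cylsIn S Dᶜ)
    (generateFrom_cylsIn S D).symm (generateFrom_cylsIn S Dᶜ).symm ?_
  rw [ProbabilityTheory.IndepSets_iff]
  rintro s s' ⟨t1, ht1, f1, rfl⟩ ⟨t2, ht2, f2, rfl⟩
  have hdisj : Disjoint t1 t2 := by
    rw [Finset.disjoint_left]
    intro e he1 he2
    exact (ht2 he2) (ht1 he1)
  have hint : cylEvent S t1 f1 ∩ cylEvent S t2 f2
      = cylEvent S (t1 ∪ t2) (fun e => if e ∈ t1 then f1 e else f2 e) := by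
    ext ω
    simp only [cylEvent, Set.mem_inter_iff, Set.mem_setOf_eq, Finset.mem_union]
    constructor
    · rintro ⟨h1, h2⟩ e he
      rcases he with he | he
      · rw [if_pos he]; exact h1 e he
      · rw [if_neg (show ¬ e ∈ t1 from fun hc => (ht2 he) (ht1 hc))]; exact h2 e he
    · intro h
      refine ⟨fun e he => ?_, fun e he => ?_⟩
      · have := h e (Or.inl he); rwa [if_pos he] at this
      · have := h e (Or.inr he)
        rwa [if_neg (show ¬ e ∈ t1 from fun hc => (ht2 he) (ht1 hc))] at this
  rw [hint]
  simp only [cylEvent]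
  rw [hμ.2 (t1 ∪ t2) (fun e => if e ∈ t1 then f1 e else f2 e), hμ.2 t1 f1, hμ.2 t2 f2,
    Finset.prod_union hdisj]
  congr 1
  · exact Finset.prod_congr rfl fun e he => by rw [if_pos he]
  · exact Finset.prod_congr rfl fun e he => by
      rw [if_neg (show ¬ e ∈ t1 from fun hc => (ht2 he) (ht1 hc))]

lemma indep_apply {S : Finset G} {p : ℝ} {μ : Measure (Config S)}
    (hμ : IsBernoulliProduct p μ) {D : Set ↥(cayleyGraph S).edgeSet}
    {X Y : Set (Config S)} (hX : MeasurableSet[coordSpace S D] X)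
    (hY : MeasurableSet[coordSpace S Dᶜ] Y) :
    μ (X ∩ Y) = μ X * μ Y :=
  (ProbabilityTheory.Indep_iff _ _ μ).mp (indep_coordSpace hμ D) X Y hX hY

/-! #### Translation invariance -/

lemma adj_mul_left {S : Finset G} {x y : G} (g : G) (h : (cayleyGraph S).Adj x y) :
    (cayleyGraph S).Adj (g * x) (g * y) := by
  obtain ⟨hne, s, hs, rfl⟩ := (h : x ≠ y ∧ ∃ s : G, (s ∈ S ∨ s⁻¹ ∈ S) ∧ y = x * s)
  exact ⟨fun hc => hne (mul_left_cancel hc), s, hs, (mul_assoc _ _ _).symm⟩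

/-- Translation action on edges. -/
def edgeMul (S : Finset G) (g : G) (e : ↥(cayleyGraph S).edgeSet) :
    ↥(cayleyGraph S).edgeSet :=
  ⟨Sym2.map (fun x => g * x) (e : Sym2 G), by
    obtain ⟨E, hE⟩ := e
    induction E using Sym2.ind with
    | _ x y =>
        rw [Sym2.map_pair_eq]
        rw [SimpleGraph.mem_edgeSet] at hE ⊢
        exact adj_mul_left g hE⟩

lemma edgeMul_edgeMul (S : Finset G) (g h : G) (e : ↥(cayleyGraph S).edgeSet) :
    edgeMul S g (edgeMul S h e) = edgeMul S (g * h) e := by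
  apply Subtype.ext
  have hc : ((fun x => g * x) ∘ fun x => h * x) = fun x => (g * h) * x := by
    funext x; simp [mul_assoc]
  simp only [edgeMul, Sym2.map_map, hc]

lemma edgeMul_one (S : Finset G) (e : ↥(cayleyGraph S).edgeSet) :
    edgeMul S 1 e = e := by
  apply Subtype.ext
  simp only [edgeMul]
  have : (fun x : G => 1 * x) = id := by funext x; simp
  rw [this, Sym2.map_id, id_eq]

/-- Translation action on configurations. -/
def confMul (S : Finset G) (g : G) (ω : Config S) : Config S :=
  fun e => ω (edgeMul S g e)

lemma measurable_confMul (S : Finset G) (g : G) : Measurable (confMul S g) :=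
  measurable_pi_lambda _ fun _ => measurable_pi_apply _

lemma openAdj_confMul (S : Finset G) (g : G) (ω : Config S) (x y : G) :
    openAdj S (confMul S g ω) x y ↔ openAdj S ω (g * x) (g * y) := by
  have hcoord : ∀ (h : (cayleyGraph S).Adj x y),
      (confMul S g ω) ⟨s(x, y), (cayleyGraph S).mem_edgeSet.mpr h⟩
        = ω ⟨s(g * x, g * y), (cayleyGraph S).mem_edgeSet.mpr (adj_mul_left g h)⟩ := by
    intro h
    have he : edgeMul S g ⟨s(x, y), (cayleyGraph S).mem_edgeSet.mpr h⟩
        = ⟨s(g * x, g * y), (cayleyGraph S).mem_edgeSet.mpr (adj_mul_left g h)⟩ :=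
      Subtype.ext (by simp [edgeMul])
    show ω (edgeMul S g ⟨s(x, y), _⟩) = _
    rw [he]
  constructor
  · rintro ⟨h, hh⟩
    exact ⟨adj_mul_left g h, by rw [← hcoord h]; exact hh⟩
  · rintro ⟨h, hh⟩
    have hxy : (cayleyGraph S).Adj x y := by
      have := adj_mul_left g⁻¹ h
      simpa [inv_mul_cancel_left] using this
    exact ⟨hxy, by rw [hcoord hxy]; exact hh⟩

lemma percConn_confMul (S : Finset G) (g : G) (ω : Config S) (x y : G) :
    percConn S (confMul S g ω) x y ↔ percConn S ω (g * x) (g * y) := by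
  constructor
  · intro h
    induction h with
    | refl => exact Relation.ReflTransGen.refl
    | @tail c d h1 h2 ih =>
        exact ih.tail ((openAdj_confMul S g ω c d).mp h2)
  · intro h
    have key : ∀ u v, percConn S ω u v → ∀ x' y', u = g * x' → v = g * y' →
        percConn S (confMul S g ω) x' y' := by
      intro u v huv
      induction huv with
      | refl =>
          intro x' y' h1 h2
          have : x' = y' := mul_left_cancel (h1.symm.trans h2)
          rw [this]
          exact Relation.ReflTransGen.refl
      | @tail c d h1 h2 ih =>
          intro x' y' hu hv
          have hc : c = g * (g⁻¹ * c) := by group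
          refine (ih x' (g⁻¹ * c) hu hc).tail ?_
          rw [openAdj_confMul S g ω]
          have h1' : g * (g⁻¹ * c) = c := by group
          rw [h1', ← hv]
          exact h2
    exact key _ _ h x y rfl rfl

lemma isBernoulliProduct_map {S : Finset G} {p : ℝ} {μ : Measure (Config S)}
    (hμ : IsBernoulliProduct p μ) (g : G) :
    IsBernoulliProduct p (μ.map (confMul S g)) := by
  classical
  haveI := hμ.1
  constructor
  · exact Measure.isProbabilityMeasure_map (measurable_confMul S g).aemeasurable
  · intro t f
    have hinj : Function.Injective (edgeMul S g) := by
      intro e1 e2 he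
      have := congrArg (edgeMul S g⁻¹) he
      rwa [edgeMul_edgeMul, edgeMul_edgeMul, inv_mul_cancel, edgeMul_one, edgeMul_one] at this
    have hmeas : MeasurableSet {ω : Config S | ∀ e ∈ t, ω e = f e} := by
      have : {ω : Config S | ∀ e ∈ t, ω e = f e}
          = ⋂ e ∈ t, {ω : Config S | ω e = f e} := by ext ω; simp
      rw [this]
      exact MeasurableSet.biInter t.countable_toSet fun e _ =>
        measurableSet_coord_pi e (f e)
    rw [Measure.map_apply (measurable_confMul S g) hmeas]
    have hpre : confMul S g ⁻¹' {ω : Config S | ∀ e ∈ t, ω e = f e}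
        = {ω : Config S | ∀ e ∈ t.image (edgeMul S g), ω e = f (edgeMul S g⁻¹ e)} := by
      ext ω
      simp only [Set.mem_preimage, Set.mem_setOf_eq, Finset.mem_image, confMul]
      constructor
      · rintro h e' ⟨e, he, rfl⟩
        rw [edgeMul_edgeMul, inv_mul_cancel, edgeMul_one]
        exact h e he
      · intro h e he
        have := h (edgeMul S g e) ⟨e, he, rfl⟩
        rwa [edgeMul_edgeMul, inv_mul_cancel, edgeMul_one] at this
    rw [hpre, hμ.2 (t.image (edgeMul S g)) (fun e => f (edgeMul S g⁻¹ e)),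
      Finset.prod_image (fun e _ e' _ h => hinj h)]
    refine Finset.prod_congr rfl fun e _ => ?_
    rw [edgeMul_edgeMul, inv_mul_cancel, edgeMul_one]

lemma measure_conn_le_tau [Countable G] {S : Finset G} {p : ℝ} {μ : Measure (Config S)}
    (hμ : IsBernoulliProduct p μ) (b a : G) :
    μ {ω : Config S | percConn S ω b a} ≤ tau S p 1 (b⁻¹ * a) := by
  have hmeas : MeasurableSet {ω : Config S | percConn S ω 1 (b⁻¹ * a)} :=
    measurableSet_percConn 1 (b⁻¹ * a)
  have hkey : μ {ω : Config S | percConn S ω b a}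
      = (μ.map (confMul S b)) {ω : Config S | percConn S ω 1 (b⁻¹ * a)} := by
    rw [Measure.map_apply (measurable_confMul S b) hmeas]
    congr 1
    ext ω
    simp only [Set.mem_preimage, Set.mem_setOf_eq]
    rw [percConn_confMul S b ω 1 (b⁻¹ * a), mul_one, mul_inv_cancel_left]
  rw [hkey, tau, percProb]
  exact le_iSup₂ (f := fun (μ' : Measure (Config S)) (_ : IsBernoulliProduct p μ') =>
    μ' {ω : Config S | percConn S ω 1 (b⁻¹ * a)}) (μ.map (confMul S b))
    (isBernoulliProduct_map hμ b)

/-! #### Integral identities -/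

lemma encard_cast_eq_tsum (s : Set G) :
    ((s.encard : ℕ∞) : ℝ≥0∞) = ∑' g : G, s.indicator (fun _ => (1 : ℝ≥0∞)) g := by
  rw [← tsum_subtype s (fun _ => (1 : ℝ≥0∞)), ENNReal.tsum_set_one]

lemma lintegral_encard [Countable G] {S : Finset G} {μ : Measure (Config S)} (X : Set G) :
    ∫⁻ ω, ((cluster S ω 1 ∩ X).encard : ℝ≥0∞) ∂μ
      = ∑' g : G, X.indicator (fun g' => μ {ω : Config S | percConn S ω 1 g'}) g := by
  classical
  have h1 : ∀ ω : Config S, ((cluster S ω 1 ∩ X).encard : ℝ≥0∞)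
      = ∑' g : G, if g ∈ X then
          ({ω' : Config S | percConn S ω' 1 g}.indicator (fun _ => (1 : ℝ≥0∞)) ω) else 0 := by
    intro ω
    rw [encard_cast_eq_tsum]
    refine tsum_congr fun g => ?_
    by_cases hgX : g ∈ X <;> by_cases hc : percConn S ω 1 g <;>
      simp [Set.indicator_apply, cluster, hgX, hc, Set.mem_inter_iff, Set.mem_setOf_eq]
  calc ∫⁻ ω, ((cluster S ω 1 ∩ X).encard : ℝ≥0∞) ∂μ
      = ∫⁻ ω, ∑' g : G, (if g ∈ X then
          ({ω' : Config S | percConn S ω' 1 g}.indicator (fun _ => (1 : ℝ≥0∞)) ω) else 0) ∂μ := by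
        exact lintegral_congr h1
    _ = ∑' g : G, ∫⁻ ω, (if g ∈ X then
          ({ω' : Config S | percConn S ω' 1 g}.indicator (fun _ => (1 : ℝ≥0∞)) ω) else 0) ∂μ := by
        refine lintegral_tsum fun g => ?_
        by_cases hgX : g ∈ X
        · simp only [if_pos hgX]
          exact ((measurable_const.indicator (measurableSet_percConn 1 g))).aemeasurable
        · simp only [if_neg hgX]
          exact measurable_const.aemeasurable
    _ = ∑' g : G, X.indicator (fun g' => μ {ω : Config S | percConn S ω 1 g'}) g := by
        refine tsum_congr fun g => ?_
        by_cases hgX : g ∈ X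
        · simp only [if_pos hgX, Set.indicator_of_mem hgX]
          exact lintegral_indicator_one (measurableSet_percConn 1 g)
        · simp only [if_neg hgX, lintegral_zero, Set.indicator_of_notMem hgX]

lemma measurable_encard_cluster [Countable G] {S : Finset G} (X : Set G) :
    Measurable fun ω : Config S => ((cluster S ω 1 ∩ X).encard : ℝ≥0∞) := by
  classical
  have h1 : (fun ω : Config S => ((cluster S ω 1 ∩ X).encard : ℝ≥0∞))
      = fun ω : Config S => ∑' g : G, (if g ∈ X then
          ({ω' : Config S | percConn S ω' 1 g}.indicator (fun _ => (1 : ℝ≥0∞)) ω) else 0) := by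
    funext ω
    rw [encard_cast_eq_tsum]
    refine tsum_congr fun g => ?_
    by_cases hgX : g ∈ X <;> by_cases hc : percConn S ω 1 g <;>
      simp [Set.indicator_apply, cluster, hgX, hc, Set.mem_inter_iff, Set.mem_setOf_eq]
  rw [h1]
  refine Measurable.ennreal_tsum fun g => ?_
  by_cases hgX : g ∈ X
  · simp only [if_pos hgX]
    exact measurable_const.indicator (measurableSet_percConn 1 g)
  · simp only [if_neg hgX]
    exact measurable_const

/-! #### Countability -/

lemma countable_of_gen {S : Finset G} (hgen : Subgroup.closure (S : Set G) = ⊤) :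
    Countable G := by
  classical
  haveI : Countable ↥((S : Set G) ∪ (S : Set G)⁻¹) := by
    have : ((S : Set G) ∪ (S : Set G)⁻¹).Finite :=
      (S.finite_toSet).union (S.finite_toSet.inv)
    exact this.countable
  have hsur : Function.Surjective
      (fun l : List ↥((S : Set G) ∪ (S : Set G)⁻¹) => (l.map Subtype.val).prod) := by
    intro g
    have hg : g ∈ Submonoid.closure ((S : Set G) ∪ (S : Set G)⁻¹) := by
      have hmem : g ∈ (Subgroup.closure (S : Set G)).toSubmonoid := by
        rw [Subgroup.mem_toSubmonoid, hgen]; exact Subgroup.mem_top g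
      rwa [Subgroup.closure_toSubmonoid] at hmem
    obtain ⟨l, hl, hprod⟩ := Submonoid.exists_list_of_mem_closure hg
    refine ⟨l.attach.map (fun x => ⟨x.1, hl x.1 x.2⟩), ?_⟩
    simp only [List.map_map]
    have : (Subtype.val ∘ fun x : {x // x ∈ l} =>
        (⟨x.1, hl x.1 x.2⟩ : ↥((S : Set G) ∪ (S : Set G)⁻¹))) = Subtype.val := rfl
    rw [this, List.attach_map_subtype_val]
    exact hprod
  exact hsur.countable

end BarrierProof
/-- **Lemma (barriers bound cluster capacity).** If `B` is a `d_S`-barrier between `{id}`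
and `A`, then `E_p[#(C(id) ∩ A)] ≤ E_p[#(C(id) ∩ B)] · χ_p` for all `0 ≤ p < p_c`. -/
theorem clusterExp_le_of_isBarrier
    (S : Finset G) (hgen : Subgroup.closure (S : Set G) = ⊤)
    (A B : Set G) (hB : IsBarrier S B {1} A)
    (p : ℝ) (hp0 : 0 ≤ p) (hppc : p < pc S) :
    clusterExp S p A ≤ clusterExp S p B * chi S p := by
  classical
  haveI hcount : Countable G := BarrierProof.countable_of_gen hgen
  show (⨆ (μ : Measure (Config S)) (_ : IsBernoulliProduct p μ),
      ∫⁻ ω, ((cluster S ω 1 ∩ A).encard : ℝ≥0∞) ∂μ) ≤ clusterExp S p B * chi S p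
  refine iSup₂_le fun μ hμ => ?_
  haveI := hμ.1
  have hμB_le : ∫⁻ ω, ((cluster S ω 1 ∩ B).encard : ℝ≥0∞) ∂μ ≤ clusterExp S p B :=
    le_iSup₂ (f := fun (μ' : Measure (Config S)) (_ : IsBernoulliProduct p μ') =>
      ∫⁻ ω, ((cluster S ω 1 ∩ B).encard : ℝ≥0∞) ∂μ') μ hμ
  refine le_trans ?_ (mul_le_mul_left hμB_le _)
  have hτ : ∀ g : G, μ {ω : Config S | percConn S ω 1 g} ≤ tau S p 1 g := fun g =>
    le_iSup₂ (f := fun (μ' : Measure (Config S)) (_ : IsBernoulliProduct p μ') =>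
      μ' {ω : Config S | percConn S ω 1 g}) μ hμ
  by_cases hchi : chi S p = ⊤
  · -- `χ = ∞`: a pointwise bound suffices.
    have hpt : ∀ ω : Config S, ((cluster S ω 1 ∩ A).encard : ℝ≥0∞)
        ≤ ((cluster S ω 1 ∩ B).encard : ℝ≥0∞) * chi S p := by
      intro ω
      rcases Set.eq_empty_or_nonempty (cluster S ω 1 ∩ B) with hb | hb
      · have ha : cluster S ω 1 ∩ A = ∅ := by
          rw [Set.eq_empty_iff_forall_notMem]
          rintro a ⟨hconn, haA⟩
          obtain ⟨b, hbB, hconnb⟩ := BarrierProof.exists_mem_B_of_conn hB haA hconn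
          exact (Set.eq_empty_iff_forall_notMem.mp hb) b ⟨hconnb, hbB⟩
        simp [ha]
      · rw [hchi]
        have h1 : (1 : ℝ≥0∞) ≤ ((cluster S ω 1 ∩ B).encard : ℝ≥0∞) := by
          have := Set.one_le_encard_iff_nonempty.mpr hb
          exact_mod_cast this
        calc ((cluster S ω 1 ∩ A).encard : ℝ≥0∞) ≤ ⊤ := le_top
          _ = 1 * ⊤ := (one_mul _).symm
          _ ≤ ((cluster S ω 1 ∩ B).encard : ℝ≥0∞) * ⊤ := mul_le_mul_left h1 _
    calc ∫⁻ ω, ((cluster S ω 1 ∩ A).encard : ℝ≥0∞) ∂μ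
        ≤ ∫⁻ ω, ((cluster S ω 1 ∩ B).encard : ℝ≥0∞) * chi S p ∂μ := lintegral_mono hpt
      _ = (∫⁻ ω, ((cluster S ω 1 ∩ B).encard : ℝ≥0∞) ∂μ) * chi S p :=
          lintegral_mul_const'' _ (BarrierProof.measurable_encard_cluster B).aemeasurable
  · -- `χ < ∞`.
    rw [BarrierProof.lintegral_encard A, BarrierProof.lintegral_encard B]
    by_cases h1B : (1 : G) ∈ B
    · -- trivial case: the identity itself lies in the barrier.
      have hle : ∑' g : G, A.indicator (fun g' => μ {ω : Config S | percConn S ω 1 g'}) g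
          ≤ chi S p := by
        rw [chi]
        refine Summable.tsum_le_tsum (fun g => ?_) ENNReal.summable ENNReal.summable
        by_cases hg : g ∈ A
        · rw [Set.indicator_of_mem hg]; exact hτ g
        · rw [Set.indicator_of_notMem hg]; exact zero_le
      have h11 : μ {ω : Config S | percConn S ω 1 1} = 1 := by
        have huniv : {ω : Config S | percConn S ω 1 1} = Set.univ := by
          ext ω
          simp only [Set.mem_setOf_eq, Set.mem_univ, iff_true]
          exact Relation.ReflTransGen.refl
        rw [huniv, measure_univ]
      have hone : (1 : ℝ≥0∞)
          ≤ ∑' g : G, B.indicator (fun g' => μ {ω : Config S | percConn S ω 1 g'}) g := by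
        calc (1 : ℝ≥0∞) = B.indicator (fun g' => μ {ω : Config S | percConn S ω 1 g'}) 1 := by
              rw [Set.indicator_of_mem h1B, h11]
          _ ≤ _ := ENNReal.le_tsum 1
      calc ∑' g : G, A.indicator (fun g' => μ {ω : Config S | percConn S ω 1 g'}) g
          ≤ chi S p := hle
        _ = 1 * chi S p := (one_mul _).symm
        _ ≤ _ := mul_le_mul_left hone _
    · -- main case: Hammersley-type decomposition over the exploration cluster.
      -- The exploration cluster is a.s. finite.
      have hclusterint : ∫⁻ ω, ((cluster S ω 1 ∩ Set.univ).encard : ℝ≥0∞) ∂μ ≠ ⊤ := by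
        rw [BarrierProof.lintegral_encard Set.univ]
        have hle : ∑' g : G, Set.univ.indicator
            (fun g' => μ {ω : Config S | percConn S ω 1 g'}) g ≤ chi S p := by
          rw [chi]
          refine Summable.tsum_le_tsum (fun g => ?_) ENNReal.summable ENNReal.summable
          rw [Set.indicator_of_mem (Set.mem_univ g)]; exact hτ g
        exact ne_top_of_le_ne_top hchi hle
      have hae := MeasureTheory.ae_iff.mp
        (MeasureTheory.ae_lt_top (BarrierProof.measurable_encard_cluster Set.univ) hclusterint)
      have hN : μ {ω : Config S | (BarrierProof.Ucl S B ω).Infinite} = 0 := by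
        refine measure_mono_null ?_ hae
        intro ω hω
        have hsub : BarrierProof.Ucl S B ω ⊆ cluster S ω 1 := fun v hv =>
          BarrierProof.Ucl_subset_cluster hv
        have hinf : (cluster S ω 1 ∩ Set.univ).Infinite := by
          rw [Set.inter_univ]; exact hω.mono hsub
        simp only [Set.mem_setOf_eq, not_lt, Set.Infinite.encard_eq hinf, ENat.toENNReal_top,
          top_le_iff, le_top]
      -- the two families of events
      set X : Finset G → G → Set (Config S) := fun V b =>
        {ω : Config S | BarrierProof.Ucl S B ω = (V : Set G)} ∩
          {ω : Config S | b ∈ B ∧ ∃ u ∈ (V : Set G), openAdj S ω u b} with hXdef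
      set Y : Finset G → G → G → Set (Config S) := fun V b a =>
        {ω : Config S | Relation.ReflTransGen
          (fun x y => openAdj S ω x y ∧ x ∉ (V : Set G) ∧ y ∉ (V : Set G)) b a} with hYdef
      have hXmeas : ∀ (V : Finset G) (b : G), MeasurableSet[BarrierProof.coordSpace S
          (BarrierProof.touching S (V : Set G))] (X V b) := by
        intro V b
        refine (BarrierProof.measurableSet_Ucl_eq h1B V).inter ?_
        have hset : {ω : Config S | b ∈ B ∧ ∃ u ∈ (V : Set G), openAdj S ω u b}
            = ⋃ u : G, {ω : Config S | (b ∈ B ∧ u ∈ (V : Set G)) ∧ openAdj S ω u b} := by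
          ext ω
          simp only [Set.mem_setOf_eq, Set.mem_iUnion]
          constructor
          · rintro ⟨hbB, u, huV, hadj⟩; exact ⟨u, ⟨hbB, huV⟩, hadj⟩
          · rintro ⟨u, ⟨hbB, huV⟩, hadj⟩; exact ⟨hbB, u, huV, hadj⟩
        rw [hset]
        refine MeasurableSet.iUnion fun u => ?_
        by_cases hc : b ∈ B ∧ u ∈ (V : Set G)
        · have heq : {ω : Config S | (b ∈ B ∧ u ∈ (V : Set G)) ∧ openAdj S ω u b}
              = {ω : Config S | openAdj S ω u b} := by
            ext ω; simp [hc]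
          rw [heq]
          exact BarrierProof.measurableSet_openAdj_coord
            (D := BarrierProof.touching S (V : Set G)) u b
            (fun h => ⟨u, hc.2, by rw [Sym2.mem_iff]; left; rfl⟩)
        · have heq : {ω : Config S | (b ∈ B ∧ u ∈ (V : Set G)) ∧ openAdj S ω u b} = ∅ := by
            ext ω
            simp only [Set.mem_setOf_eq, Set.mem_empty_iff_false, iff_false]
            rintro ⟨hc', -⟩; exact hc hc'
          rw [heq]
          exact BarrierProof.measurableSet_const_prop False
      have hXamb : ∀ (V : Finset G) (b : G), MeasurableSet (X V b) := fun V b =>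
        BarrierProof.coordSpace_le S _ _ (hXmeas V b)
      have hindep : ∀ (V : Finset G) (b a : G), μ (X V b ∩ Y V b a) = μ (X V b) * μ (Y V b a) :=
        fun V b a => BarrierProof.indep_apply hμ (hXmeas V b)
          (BarrierProof.measurableSet_connOff (V : Set G) b a)
      have hYconn : ∀ (V : Finset G) (b a : G),
          Y V b a ⊆ {ω : Config S | percConn S ω b a} := fun V b a ω h =>
        Relation.ReflTransGen.mono (fun _ _ hh => hh.1) _ _ h
      -- per-point bound
      have hper : ∀ a ∈ A, μ {ω : Config S | percConn S ω 1 a}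
          ≤ ∑' V : Finset G, ∑' b : G, μ (X V b) * tau S p 1 (b⁻¹ * a) := by
        intro a haA
        have hcover : {ω : Config S | percConn S ω 1 a}
            ⊆ (⋃ V : Finset G, ({ω : Config S | BarrierProof.Ucl S B ω = (V : Set G)}
                ∩ {ω : Config S | percConn S ω 1 a}))
              ∪ {ω : Config S | (BarrierProof.Ucl S B ω).Infinite} := by
          intro ω hω
          by_cases hfin : (BarrierProof.Ucl S B ω).Finite
          · left
            refine Set.mem_iUnion.mpr ⟨hfin.toFinset, ?_, hω⟩
            simp [Set.Finite.coe_toFinset]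
          · right; exact hfin
        have hsplit : ∀ V : Finset G,
            {ω : Config S | BarrierProof.Ucl S B ω = (V : Set G)}
                ∩ {ω : Config S | percConn S ω 1 a}
              ⊆ ⋃ b : G, X V b ∩ Y V b a := by
          rintro V ω ⟨hUV, hconn⟩
          rw [Set.mem_setOf_eq] at hUV hconn
          obtain ⟨b, hbB, ⟨u, huU, hadj⟩, hoff⟩ :=
            BarrierProof.exists_boundary hB h1B haA hconn
          rw [hUV] at huU hoff
          exact Set.mem_iUnion.mpr ⟨b, ⟨⟨hUV, hbB, u, huU, hadj⟩, hoff⟩⟩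
        calc μ {ω : Config S | percConn S ω 1 a}
            ≤ μ ((⋃ V : Finset G, ({ω : Config S | BarrierProof.Ucl S B ω = (V : Set G)}
                ∩ {ω : Config S | percConn S ω 1 a}))
              ∪ {ω : Config S | (BarrierProof.Ucl S B ω).Infinite}) := measure_mono hcover
          _ ≤ μ (⋃ V : Finset G, ({ω : Config S | BarrierProof.Ucl S B ω = (V : Set G)}
                ∩ {ω : Config S | percConn S ω 1 a}))
              + μ {ω : Config S | (BarrierProof.Ucl S B ω).Infinite} := measure_union_le _ _
          _ = μ (⋃ V : Finset G, ({ω : Config S | BarrierProof.Ucl S B ω = (V : Set G)}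
                ∩ {ω : Config S | percConn S ω 1 a})) := by rw [hN, add_zero]
          _ ≤ ∑' V : Finset G, μ ({ω : Config S | BarrierProof.Ucl S B ω = (V : Set G)}
                ∩ {ω : Config S | percConn S ω 1 a}) := measure_iUnion_le _
          _ ≤ ∑' V : Finset G, μ (⋃ b : G, X V b ∩ Y V b a) :=
              Summable.tsum_le_tsum (fun V => measure_mono (hsplit V))
                ENNReal.summable ENNReal.summable
          _ ≤ ∑' V : Finset G, ∑' b : G, μ (X V b ∩ Y V b a) :=
              Summable.tsum_le_tsum (fun V => measure_iUnion_le _)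
                ENNReal.summable ENNReal.summable
          _ = ∑' V : Finset G, ∑' b : G, μ (X V b) * μ (Y V b a) :=
              tsum_congr fun V => tsum_congr fun b => hindep V b a
          _ ≤ ∑' V : Finset G, ∑' b : G, μ (X V b) * tau S p 1 (b⁻¹ * a) := by
              refine Summable.tsum_le_tsum (fun V => Summable.tsum_le_tsum (fun b => ?_)
                ENNReal.summable ENNReal.summable) ENNReal.summable ENNReal.summable
              exact mul_le_mul_right (le_trans (measure_mono (hYconn V b a))
                (BarrierProof.measure_conn_le_tau hμ b a)) _
      -- sum over `V` of the `X` events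
      have hVsum : ∀ b : G, ∑' V : Finset G, μ (X V b)
          ≤ B.indicator (fun b' => μ {ω : Config S | percConn S ω 1 b'}) b := by
        intro b
        have hdisj : Pairwise (Function.onFun Disjoint fun V : Finset G => X V b) := by
          intro V V' hne
          refine Set.disjoint_left.mpr ?_
          rintro ω ⟨hU1, -⟩ ⟨hU2, -⟩
          rw [Set.mem_setOf_eq] at hU1 hU2
          exact hne (Finset.coe_injective (hU1.symm.trans hU2))
        rw [← measure_iUnion hdisj (fun V => hXamb V b)]
        by_cases hbB : b ∈ B
        · rw [Set.indicator_of_mem hbB]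
          refine measure_mono ?_
          intro ω hω
          obtain ⟨V, hV⟩ := Set.mem_iUnion.mp hω
          obtain ⟨hUV, -, u, huV, hadj⟩ := hV
          rw [Set.mem_setOf_eq] at hUV
          have huU : u ∈ BarrierProof.Ucl S B ω := by rw [hUV]; exact huV
          exact Relation.ReflTransGen.tail (BarrierProof.Ucl_subset_cluster huU) hadj
        · rw [Set.indicator_of_notMem hbB]
          have hempty : (⋃ V : Finset G, X V b) = ∅ := by
            ext ω
            simp only [Set.mem_iUnion, Set.mem_empty_iff_false, iff_false, not_exists]
            rintro V ⟨-, hbB', -⟩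
            exact hbB hbB'
          rw [hempty, measure_empty]
      -- assemble everything
      calc ∑' g : G, A.indicator (fun g' => μ {ω : Config S | percConn S ω 1 g'}) g
          ≤ ∑' g : G, ∑' V : Finset G, ∑' b : G, μ (X V b) * tau S p 1 (b⁻¹ * g) := by
            refine Summable.tsum_le_tsum (fun g => ?_) ENNReal.summable ENNReal.summable
            by_cases hg : g ∈ A
            · rw [Set.indicator_of_mem hg]; exact hper g hg
            · rw [Set.indicator_of_notMem hg]; exact zero_le
        _ = ∑' V : Finset G, ∑' b : G, ∑' g : G, μ (X V b) * tau S p 1 (b⁻¹ * g) := by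
            rw [ENNReal.tsum_comm]
            exact tsum_congr fun V => ENNReal.tsum_comm
        _ = ∑' V : Finset G, ∑' b : G, μ (X V b) * chi S p := by
            refine tsum_congr fun V => tsum_congr fun b => ?_
            rw [ENNReal.tsum_mul_left]
            congr 1
            rw [chi]
            exact (Equiv.mulLeft b⁻¹).tsum_eq (tau S p 1)
        _ = (∑' b : G, ∑' V : Finset G, μ (X V b)) * chi S p := by
            rw [ENNReal.tsum_comm]
            rw [← ENNReal.tsum_mul_right]
            exact tsum_congr fun b => ENNReal.tsum_mul_right
        _ ≤ (∑' g : G, B.indicator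
              (fun g' => μ {ω : Config S | percConn S ω 1 g'}) g) * chi S p :=
            mul_le_mul_left
              (Summable.tsum_le_tsum hVsum ENNReal.summable ENNReal.summable) _
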